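/- arXiv:2208.05308 — 5 statements merged into one kernel-verified Lean document; each statement's English description precedes it below -/
import Mathlib

section
/- Let s = (s1, s2) and t = (t1, t2) belong to the second-order cone K^n with ⟨s, t⟩ = 0, and suppose s2 ≠ 0 and t2 ≠ 0. Then s1 = ‖s2‖, t1 = ‖t2‖, and the vectors s2 and t2 are anti-parallel: s2 = −(‖s2‖/‖t2‖)·t2. -/
open scoped Classical RealInnerProductSpace

noncomputable section

/-- The "tail" `x₂ ∈ ℝ^{n-1}` of a vector `x = (x₁, x₂) ∈ ℝ × ℝ^{n-1}`,
modelled as `x ∈ ℝ^{n}` via `EuclideanSpace ℝ (Fin (n+1))`. -/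
def socTail {n : ℕ} (x : EuclideanSpace ℝ (Fin (n + 1))) : EuclideanSpace ℝ (Fin n) :=
  WithLp.toLp 2 (fun i => x i.succ)

/-- The second-order cone `K = {(x₁, x₂) ∈ ℝ × ℝ^{n-1} : ‖x₂‖ ≤ x₁}`. -/
def soc (n : ℕ) : Set (EuclideanSpace ℝ (Fin (n + 1))) :=
  {x | ‖socTail x‖ ≤ x 0}

/-- The SOC absolute value `|x|`. -/
def socAbs {n : ℕ} (x : EuclideanSpace ℝ (Fin (n + 1))) :
    EuclideanSpace ℝ (Fin (n + 1)) :=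
  if socTail x = 0 then
    WithLp.toLp 2 (fun i => if i = 0 then |x 0| else 0)
  else
    WithLp.toLp 2 (fun i =>
      if i = 0 then (|x 0 - ‖socTail x‖| + |x 0 + ‖socTail x‖|) / 2
      else ((|x 0 + ‖socTail x‖| - |x 0 - ‖socTail x‖|) / 2) * (x i / ‖socTail x‖))

lemma inner_split {n : ℕ} (s t : EuclideanSpace ℝ (Fin (n + 1))) :
    ⟪s, t⟫ = s 0 * t 0 + ⟪socTail s, socTail t⟫ := by
  simp only [PiLp.inner_apply, RCLike.inner_apply, conj_trivial]
  rw [Fin.sum_univ_succ]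
  simp [socTail, mul_comm]

/-- If `s, t ∈ K`, `⟪s, t⟫ = 0`, `s₂ ≠ 0` and `t₂ ≠ 0`, then `s₁ = ‖s₂‖`, `t₁ = ‖t₂‖`
and `s₂ = -(‖s₂‖/‖t₂‖) • t₂`. -/
theorem soc_inner_zero_structure (n : ℕ) (s t : EuclideanSpace ℝ (Fin (n + 1)))
    (hs : s ∈ soc n) (ht : t ∈ soc n) (hst : ⟪s, t⟫ = 0)
    (hs2 : socTail s ≠ 0) (ht2 : socTail t ≠ 0) :
    s 0 = ‖socTail s‖ ∧ t 0 = ‖socTail t‖ ∧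
      socTail s = -(‖socTail s‖ / ‖socTail t‖) • socTail t := by
  have hsn : (0:ℝ) < ‖socTail s‖ := norm_pos_iff.2 hs2
  have htn : (0:ℝ) < ‖socTail t‖ := norm_pos_iff.2 ht2
  have hs0 : ‖socTail s‖ ≤ s 0 := hs
  have ht0 : ‖socTail t‖ ≤ t 0 := ht
  have hsplit := inner_split s t
  rw [hst] at hsplit
  have hcs : -(‖socTail s‖ * ‖socTail t‖) ≤ ⟪socTail s, socTail t⟫ :=
    neg_le_of_abs_le (abs_real_inner_le_norm _ _)
  have hmul : ‖socTail s‖ * ‖socTail t‖ ≤ s 0 * t 0 :=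
    mul_le_mul hs0 ht0 htn.le (hsn.trans_le hs0).le
  have hkey : s 0 * t 0 = ‖socTail s‖ * ‖socTail t‖ := by nlinarith
  have h1 : s 0 = ‖socTail s‖ := by nlinarith
  have h2 : t 0 = ‖socTail t‖ := by nlinarith
  refine ⟨h1, h2, ?_⟩
  have hinner : ⟪socTail s, -socTail t⟫ = ‖socTail s‖ * ‖-socTail t‖ := by
    rw [inner_neg_right, norm_neg]; nlinarith
  have := inner_eq_norm_mul_iff_real.1 hinner
  rw [norm_neg] at this
  set a := ‖socTail s‖ with ha
  set b := ‖socTail t‖ with hb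
  have heq : socTail s = b⁻¹ • (a • (-socTail t)) := by
    rw [← this, smul_smul, inv_mul_cancel₀ htn.ne', one_smul]
  rw [heq, smul_neg, smul_neg, smul_smul, ← neg_smul, div_eq_inv_mul]
end
end

section
/- Let A be a real n×n matrix, b ∈ ℝ^n, γ > 0, and h(x) = γ·Aᵀ(b + |x| − Ax), where |·| is the SOC absolute value. For every t₀ ∈ ℝ and x₀ ∈ ℝ^n, there exists a unique differentiable function x : [t₀, ∞) → ℝ^n with x(t₀) = x₀ and x'(t) = h(x(t)) for all t ≥ t₀. -/
open scoped Classical RealInnerProductSpace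
open scoped NNReal
open Set

noncomputable section

def sF (a s : ℝ) : ℝ := (|a - s| + |a + s|) / 2
def sC (a s : ℝ) : ℝ := (|a + s| - |a - s|) / 2
lemma sF_lip (a b s t : ℝ) : |sF a s - sF b t| ≤ |a - b| + |s - t| := by
  have hX : |(|a - s| - |b - t|)| ≤ |a - b| + |s - t| := by
    refine (abs_abs_sub_abs_le_abs_sub _ _).trans ?_
    have h : (a - s) - (b - t) = (a - b) - (s - t) := by ring
    rw [h]; exact abs_sub _ _
  have hY : |(|a + s| - |b + t|)| ≤ |a - b| + |s - t| := by
    refine (abs_abs_sub_abs_le_abs_sub _ _).trans ?_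
    have h : (a + s) - (b + t) = (a - b) + (s - t) := by ring
    rw [h]; exact abs_add_le _ _
  have h : sF a s - sF b t = ((|a - s| - |b - t|) + (|a + s| - |b + t|)) / 2 := by
    unfold sF; ring
  rw [h]
  calc |((|a - s| - |b - t|) + (|a + s| - |b + t|)) / 2|
      ≤ (|(|a - s| - |b - t|)| + |(|a + s| - |b + t|)|) / 2 := by
        rw [abs_div]
        simp only [abs_two]
        gcongr
        exact abs_add_le _ _
    _ ≤ |a - b| + |s - t| := by linarith

lemma sC_lip (a b s t : ℝ) : |sC a s - sC b t| ≤ |a - b| + |s - t| := by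
  have hX : |(|a - s| - |b - t|)| ≤ |a - b| + |s - t| := by
    refine (abs_abs_sub_abs_le_abs_sub _ _).trans ?_
    have h : (a - s) - (b - t) = (a - b) - (s - t) := by ring
    rw [h]; exact abs_sub _ _
  have hY : |(|a + s| - |b + t|)| ≤ |a - b| + |s - t| := by
    refine (abs_abs_sub_abs_le_abs_sub _ _).trans ?_
    have h : (a + s) - (b + t) = (a - b) + (s - t) := by ring
    rw [h]; exact abs_add_le _ _
  have h : sC a s - sC b t = ((|a + s| - |b + t|) - ((|a - s| - |b - t|))) / 2 := by
    unfold sC; ring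
  rw [h]
  calc |((|a + s| - |b + t|) - (|a - s| - |b - t|)) / 2|
      ≤ (|(|a + s| - |b + t|)| + |(|a - s| - |b - t|)|) / 2 := by
        rw [abs_div]
        simp only [abs_two]
        gcongr
        exact abs_sub _ _
    _ ≤ |a - b| + |s - t| := by linarith

lemma sC_bound (a s : ℝ) (hs : 0 ≤ s) : |sC a s| ≤ s := by
  have h := abs_abs_sub_abs_le_abs_sub (a + s) (a - s)
  have h2 : (a + s) - (a - s) = 2 * s := by ring
  rw [h2] at h
  unfold sC
  rw [abs_div, abs_two]
  have h3 : |2 * s| = 2 * s := abs_of_nonneg (by linarith)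
  rw [h3] at h
  linarith

lemma sF_zero (a : ℝ) : sF a 0 = |a| := by unfold sF; simp
lemma sC_zero (a : ℝ) : sC a 0 = 0 := by unfold sC; simp

variable {n : ℕ}

def e₀ : EuclideanSpace ℝ (Fin (n + 1)) := EuclideanSpace.single 0 1

lemma socTail_sub (x y : EuclideanSpace ℝ (Fin (n + 1))) :
    socTail (x - y) = socTail x - socTail y := by ext i; simp [socTail]

lemma norm_socTail_le (x : EuclideanSpace ℝ (Fin (n + 1))) : ‖socTail x‖ ≤ ‖x‖ := by
  rw [EuclideanSpace.norm_eq, EuclideanSpace.norm_eq]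
  apply Real.sqrt_le_sqrt
  rw [Fin.sum_univ_succ]
  have h : ∑ i : Fin n, ‖socTail x i‖ ^ 2 = ∑ i : Fin n, ‖x i.succ‖ ^ 2 := rfl
  rw [h]
  have : (0:ℝ) ≤ ‖x 0‖ ^ 2 := by positivity
  linarith

lemma coord_abs_le_norm (x : EuclideanSpace ℝ (Fin (n + 1))) (i : Fin (n + 1)) :
    |x i| ≤ ‖x‖ := by
  have := EuclideanSpace.norm_eq x
  rw [EuclideanSpace.norm_eq]
  have h1 : |x i| = Real.sqrt (‖x i‖ ^ 2) := by
    rw [Real.sqrt_sq_eq_abs]; simp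
  rw [h1]
  apply Real.sqrt_le_sqrt
  exact Finset.single_le_sum (f := fun j => ‖x j‖ ^ 2) (fun j _ => by positivity)
    (Finset.mem_univ i)

lemma norm_tailPart (x : EuclideanSpace ℝ (Fin (n + 1))) :
    ‖x - x 0 • e₀‖ = ‖socTail x‖ := by
  rw [EuclideanSpace.norm_eq, EuclideanSpace.norm_eq]
  congr 1
  rw [Fin.sum_univ_succ]
  have h0 : (x - x 0 • e₀ : EuclideanSpace ℝ (Fin (n + 1))) 0 = 0 := by
    simp [e₀, EuclideanSpace.single_apply]
  have hs : ∀ i : Fin n, (x - x 0 • e₀ : EuclideanSpace ℝ (Fin (n + 1))) i.succ = x i.succ := by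
    intro i
    simp [e₀, EuclideanSpace.single_apply, (Fin.succ_ne_zero i)]
  rw [h0]
  simp only [hs]
  have h : ∑ i : Fin n, ‖socTail x i‖ ^ 2 = ∑ i : Fin n, ‖x i.succ‖ ^ 2 := rfl
  rw [h]
  simp

lemma socAbs_eq (x : EuclideanSpace ℝ (Fin (n + 1))) :
    socAbs x = sF (x 0) ‖socTail x‖ • e₀
      + (sC (x 0) ‖socTail x‖ / ‖socTail x‖) • (x - x 0 • e₀) := by
  ext i
  have hrhs : (sF (x 0) ‖socTail x‖ • e₀
      + (sC (x 0) ‖socTail x‖ / ‖socTail x‖) • (x - x 0 • e₀)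
      : EuclideanSpace ℝ (Fin (n + 1))) i
      = sF (x 0) ‖socTail x‖ * (if i = 0 then 1 else 0)
        + (sC (x 0) ‖socTail x‖ / ‖socTail x‖) * (x i - x 0 * (if i = 0 then 1 else 0)) := by
    simp [e₀, EuclideanSpace.single_apply]
  rw [hrhs]
  by_cases h : socTail x = 0
  · have hn : ‖socTail x‖ = 0 := by rw [h]; simp
    by_cases hi : i = 0
    · subst hi
      simp [socAbs, h, hn, sF_zero, sC_zero]
    · simp [socAbs, h, hn, sF_zero, sC_zero, hi]
  · have hs : (0:ℝ) < ‖socTail x‖ := by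
      rcases (norm_nonneg (socTail x)).lt_or_eq with h1 | h1
      · exact h1
      · exact absurd (norm_eq_zero.mp h1.symm) h
    by_cases hi : i = 0
    · subst hi
      simp only [socAbs, if_neg h, if_pos rfl, eq_self_iff_true, if_true]
      unfold sF
      ring
    · simp only [socAbs, if_neg h, if_neg hi, hi, if_false]
      unfold sC
      field_simp
      ring

lemma sC_div_abs_le_one (a s : ℝ) (hs : 0 ≤ s) : |sC a s / s| ≤ 1 := by
  rcases hs.lt_or_eq with h | h
  · rw [abs_div, abs_of_nonneg hs]
    rw [div_le_one h]
    exact sC_bound a s hs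
  · rw [← h]
    simp

lemma key_tail (x y : EuclideanSpace ℝ (Fin (n + 1)))
    (hts : ‖socTail y‖ ≤ ‖socTail x‖) :
    ‖(sC (x 0) ‖socTail x‖ / ‖socTail x‖) • (x - x 0 • e₀)
      - (sC (y 0) ‖socTail y‖ / ‖socTail y‖) • (y - y 0 • e₀)‖ ≤ 4 * ‖x - y‖ := by
  set s := ‖socTail x‖ with hsdef
  set t := ‖socTail y‖ with htdef
  have hs0 : 0 ≤ s := norm_nonneg _
  have ht0 : 0 ≤ t := norm_nonneg _
  set cx : ℝ := sC (x 0) s / s with hcx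
  set cy : ℝ := sC (y 0) t / t with hcy
  set Px : EuclideanSpace ℝ (Fin (n + 1)) := x - x 0 • e₀ with hPx
  set Py : EuclideanSpace ℝ (Fin (n + 1)) := y - y 0 • e₀ with hPy
  have hid : cx • Px - cy • Py = cx • (Px - Py) + (cx - cy) • Py := by
    module
  have hsub0 : ((x - y : EuclideanSpace ℝ (Fin (n + 1))) 0) = x 0 - y 0 := rfl
  have hPxy : Px - Py
      = (x - y) - ((x - y : EuclideanSpace ℝ (Fin (n + 1))) 0) • e₀ := by
    rw [hsub0, hPx, hPy]; module
  have hPdiff : ‖Px - Py‖ ≤ ‖x - y‖ := by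
    rw [hPxy, norm_tailPart]
    exact norm_socTail_le _
  have hxy0 : |x 0 - y 0| ≤ ‖x - y‖ := by
    rw [← hsub0]; exact coord_abs_le_norm _ _
  have hst : |s - t| ≤ ‖x - y‖ := by
    calc |s - t| ≤ ‖socTail x - socTail y‖ := abs_norm_sub_norm_le _ _
      _ = ‖socTail (x - y)‖ := by rw [socTail_sub]
      _ ≤ ‖x - y‖ := norm_socTail_le _
  have hΔ : |sC (x 0) s - sC (y 0) t| ≤ |x 0 - y 0| + |s - t| := sC_lip _ _ _ _
  have part1 : ‖cx • (Px - Py)‖ ≤ ‖x - y‖ := by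
    rw [norm_smul]
    calc ‖cx‖ * ‖Px - Py‖ ≤ 1 * ‖x - y‖ := by
          apply mul_le_mul (sC_div_abs_le_one _ _ hs0) hPdiff (norm_nonneg _) zero_le_one
      _ = ‖x - y‖ := one_mul _
  have hnPy : ‖Py‖ = t := norm_tailPart y
  have claim : |cx - cy| * t ≤ |sC (x 0) s - sC (y 0) t| + |s - t| := by
    rcases ht0.lt_or_eq with htpos | hteq
    · have hspos : 0 < s := lt_of_lt_of_le htpos hts
      have e1 : (cx - cy) * t = (sC (x 0) s * t - sC (y 0) t * s) / s := by
        rw [hcx, hcy]; field_simp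
      have e2 : |sC (x 0) s * t - sC (y 0) t * s|
          ≤ t * |sC (x 0) s - sC (y 0) t| + t * |s - t| := by
        have e3 : sC (x 0) s * t - sC (y 0) t * s
            = t * (sC (x 0) s - sC (y 0) t) + sC (y 0) t * (t - s) := by ring
        rw [e3]
        calc |t * (sC (x 0) s - sC (y 0) t) + sC (y 0) t * (t - s)|
            ≤ |t * (sC (x 0) s - sC (y 0) t)| + |sC (y 0) t * (t - s)| := abs_add_le _ _
          _ = t * |sC (x 0) s - sC (y 0) t| + |sC (y 0) t| * |t - s| := by
              rw [abs_mul, abs_mul, abs_of_nonneg ht0]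
          _ ≤ t * |sC (x 0) s - sC (y 0) t| + t * |s - t| := by
              rw [abs_sub_comm t s]
              gcongr
              exact sC_bound _ _ ht0
      have e4 : |cx - cy| * t = |sC (x 0) s * t - sC (y 0) t * s| / s := by
        have h8 : |cx - cy| * t = |(cx - cy) * t| := by
          rw [abs_mul, abs_of_nonneg ht0]
        rw [h8, e1, abs_div, abs_of_pos hspos]
      rw [e4, div_le_iff₀ hspos]
      have h5 : t * |sC (x 0) s - sC (y 0) t| + t * |s - t|
          ≤ (|sC (x 0) s - sC (y 0) t| + |s - t|) * s := by
        have h6 : 0 ≤ |sC (x 0) s - sC (y 0) t| := abs_nonneg _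
        have h7 : 0 ≤ |s - t| := abs_nonneg _
        nlinarith
      linarith
    · rw [← hteq, mul_zero]
      positivity
  have part2 : ‖(cx - cy) • Py‖ ≤ 3 * ‖x - y‖ := by
    rw [norm_smul, hnPy, Real.norm_eq_abs]
    calc |cx - cy| * t ≤ |sC (x 0) s - sC (y 0) t| + |s - t| := claim
      _ ≤ (|x 0 - y 0| + |s - t|) + |s - t| := by linarith
      _ ≤ 3 * ‖x - y‖ := by linarith
  calc ‖cx • Px - cy • Py‖ = ‖cx • (Px - Py) + (cx - cy) • Py‖ := by rw [hid]
    _ ≤ ‖cx • (Px - Py)‖ + ‖(cx - cy) • Py‖ := norm_add_le _ _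
    _ ≤ ‖x - y‖ + 3 * ‖x - y‖ := add_le_add part1 part2
    _ = 4 * ‖x - y‖ := by ring

lemma socAbs_lip_key (x y : EuclideanSpace ℝ (Fin (n + 1)))
    (hts : ‖socTail y‖ ≤ ‖socTail x‖) :
    ‖socAbs x - socAbs y‖ ≤ 6 * ‖x - y‖ := by
  rw [socAbs_eq x, socAbs_eq y]
  have hxy0 : |x 0 - y 0| ≤ ‖x - y‖ := by
    have h : ((x - y : EuclideanSpace ℝ (Fin (n + 1))) 0) = x 0 - y 0 := rfl
    rw [← h]; exact coord_abs_le_norm _ _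
  have hst : |‖socTail x‖ - ‖socTail y‖| ≤ ‖x - y‖ := by
    calc |‖socTail x‖ - ‖socTail y‖| ≤ ‖socTail x - socTail y‖ := abs_norm_sub_norm_le _ _
      _ = ‖socTail (x - y)‖ := by rw [socTail_sub]
      _ ≤ ‖x - y‖ := norm_socTail_le _
  have hid : (sF (x 0) ‖socTail x‖ • e₀
        + (sC (x 0) ‖socTail x‖ / ‖socTail x‖) • (x - x 0 • e₀))
      - (sF (y 0) ‖socTail y‖ • e₀
        + (sC (y 0) ‖socTail y‖ / ‖socTail y‖) • (y - y 0 • e₀))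
      = (sF (x 0) ‖socTail x‖ - sF (y 0) ‖socTail y‖) • (e₀ : EuclideanSpace ℝ (Fin (n + 1)))
        + ((sC (x 0) ‖socTail x‖ / ‖socTail x‖) • (x - x 0 • e₀)
          - (sC (y 0) ‖socTail y‖ / ‖socTail y‖) • (y - y 0 • e₀)) := by
    module
  rw [hid]
  have hne : ‖(e₀ : EuclideanSpace ℝ (Fin (n + 1)))‖ = 1 := by
    rw [e₀, EuclideanSpace.norm_single]; norm_num
  calc ‖(sF (x 0) ‖socTail x‖ - sF (y 0) ‖socTail y‖) • (e₀ : EuclideanSpace ℝ (Fin (n + 1)))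
        + ((sC (x 0) ‖socTail x‖ / ‖socTail x‖) • (x - x 0 • e₀)
          - (sC (y 0) ‖socTail y‖ / ‖socTail y‖) • (y - y 0 • e₀))‖
      ≤ ‖(sF (x 0) ‖socTail x‖ - sF (y 0) ‖socTail y‖) • (e₀ : EuclideanSpace ℝ (Fin (n + 1)))‖
        + ‖(sC (x 0) ‖socTail x‖ / ‖socTail x‖) • (x - x 0 • e₀)
          - (sC (y 0) ‖socTail y‖ / ‖socTail y‖) • (y - y 0 • e₀)‖ := norm_add_le _ _
    _ ≤ (|x 0 - y 0| + |‖socTail x‖ - ‖socTail y‖|) + 4 * ‖x - y‖ := by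
        apply add_le_add
        · rw [norm_smul, hne, mul_one, Real.norm_eq_abs]
          exact sF_lip _ _ _ _
        · exact key_tail x y hts
    _ ≤ 6 * ‖x - y‖ := by linarith

lemma socAbs_lipschitz : LipschitzWith 6 (socAbs (n := n)) := by
  apply LipschitzWith.of_dist_le_mul
  intro x y
  rw [dist_eq_norm, dist_eq_norm]
  have hc : ((6 : ℝ≥0) : ℝ) = 6 := by norm_num
  rw [hc]
  rcases le_total ‖socTail y‖ ‖socTail x‖ with h | h
  · exact socAbs_lip_key x y h
  · rw [norm_sub_rev (socAbs x), norm_sub_rev x]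
    exact socAbs_lip_key y x h

variable {E : Type*} [NormedAddCommGroup E] [NormedSpace ℝ E] [CompleteSpace E]

theorem ode_step {f : E → E} {K : ℝ≥0} (hK : 0 < (K : ℝ)) (hf : LipschitzWith K f)
    (a : ℝ) (p : E) :
    ∃ x : ℝ → E, x a = p ∧ ∀ t ∈ Set.Icc a (a + (2 * (K : ℝ))⁻¹),
      HasDerivWithinAt x (f (x t)) (Set.Icc a (a + (2 * (K : ℝ))⁻¹)) t := by
  set ε : ℝ := (2 * (K : ℝ))⁻¹ with hεdef
  have hε : 0 < ε := by positivity
  set M : ℝ := ‖f p‖ with hM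
  have hM0 : 0 ≤ M := norm_nonneg _
  set R : ℝ := 2 * ε * M + 1 with hR
  have hRpos : 0 < R := by positivity
  have hKε : (K : ℝ) * ε = 1 / 2 := by
    rw [hεdef]
    field_simp
  set Rn : ℝ≥0 := ⟨R, hRpos.le⟩ with hRn
  set Ln : ℝ≥0 := ⟨M + K * R, by positivity⟩ with hLn
  have hpl : IsPicardLindelof (fun _ : ℝ => f) (tmin := a) (tmax := a + ε)
      ⟨a, le_rfl, by linarith⟩ p Rn 0 Ln K := by
    constructor
    · exact fun t _ => hf.lipschitzOnWith
    · exact fun _ _ => continuousOn_const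
    · intro t _ x hx
      show ‖f x‖ ≤ M + K * R
      have h1 : dist (f x) (f p) ≤ K * R := by
        calc dist (f x) (f p) ≤ K * dist x p := hf.dist_le_mul x p
          _ ≤ K * R := by
              apply mul_le_mul_of_nonneg_left _ (by positivity)
              exact Metric.mem_closedBall.mp hx
      calc ‖f x‖ ≤ ‖f p‖ + dist (f x) (f p) := by
            rw [dist_eq_norm]
            calc ‖f x‖ = ‖f p + (f x - f p)‖ := by
                  congr 1
                  abel
              _ ≤ ‖f p‖ + ‖f x - f p‖ := norm_add_le _ _
        _ ≤ M + K * R := by rw [← hM]; linarith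
    · show (M + K * R) * max (a + ε - a) (a - a) ≤ R - ((0:ℝ≥0):ℝ)
      rw [NNReal.coe_zero, sub_zero]
      have hmax : max (a + ε - a) (a - a) = ε := by
        rw [add_sub_cancel_left, sub_self]
        exact max_eq_left hε.le
      rw [hmax]
      have hexp : (M + (K : ℝ) * R) * ε = ε * M + ((K : ℝ) * ε) * R := by ring
      rw [hexp, hKε, hR]
      linarith
  obtain ⟨x, hx0, hx⟩ := hpl.exists_eq_forall_mem_Icc_hasDerivWithinAt₀
  exact ⟨x, hx0, hx⟩

theorem ode_exists {f : E → E} {K : ℝ≥0} (hK : 0 < (K : ℝ)) (hf : LipschitzWith K f)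
    (t₀ : ℝ) (x₀ : E) :
    ∃ x : ℝ → E, x t₀ = x₀ ∧
      ∀ t ∈ Set.Ici t₀, HasDerivWithinAt x (f (x t)) (Set.Ici t₀) t := by
  set ε : ℝ := (2 * (K : ℝ))⁻¹ with hεdef
  have hε : 0 < ε := by positivity
  choose step hstep0 hstep using ode_step hK hf
  set a : ℕ → ℝ := fun k => t₀ + k * ε with ha
  have ha0 : a 0 = t₀ := by simp [ha]
  have ha_succ : ∀ k : ℕ, a k + ε = a (k + 1) := by
    intro k
    simp only [ha]
    push_cast
    ring
  have ha_lt : ∀ k : ℕ, a k < a (k + 1) := by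
    intro k
    rw [← ha_succ k]
    linarith
  have ha_le : ∀ k : ℕ, t₀ ≤ a k := by
    intro k
    simp only [ha]
    have : (0:ℝ) ≤ (k : ℝ) * ε := by positivity
    linarith
  set sol : ℕ → ℝ → E := fun k =>
    Nat.rec (step t₀ x₀) (fun k xk => step (a (k + 1)) (xk (a (k + 1)))) k with hsol
  have sol0 : sol 0 = step t₀ x₀ := rfl
  have solS : ∀ k, sol (k + 1) = step (a (k + 1)) (sol k (a (k + 1))) := fun _ => rfl
  have sol_init : ∀ k, sol (k + 1) (a (k + 1)) = sol k (a (k + 1)) := by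
    intro k
    rw [solS]
    exact hstep0 _ _
  have sol_deriv : ∀ k, ∀ t ∈ Set.Icc (a k) (a (k + 1)),
      HasDerivWithinAt (sol k) (f (sol k t)) (Set.Icc (a k) (a (k + 1))) t := by
    intro k
    rw [← ha_succ k]
    cases k with
    | zero =>
        rw [sol0, ha0]
        exact hstep t₀ x₀
    | succ m =>
        rw [solS]
        exact hstep _ _
  set N : ℝ → ℕ := fun t => ⌊(t - t₀) / ε⌋₊ with hN
  set x : ℝ → E := fun t => sol (N t) t with hx
  -- basic facts about N
  have hN_left : ∀ t, t₀ ≤ t → a (N t) ≤ t := by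
    intro t ht
    have h1 : (0:ℝ) ≤ (t - t₀) / ε := by
      apply div_nonneg (by linarith) hε.le
    have h2 : (N t : ℝ) ≤ (t - t₀) / ε := Nat.floor_le h1
    have h3 : (N t : ℝ) * ε ≤ t - t₀ := by
      rw [← le_div_iff₀ hε]
      exact h2
    simp only [ha]
    linarith
  have hN_right : ∀ t, t < a (N t + 1) := by
    intro t
    have h2 : (t - t₀) / ε < (N t : ℝ) + 1 := Nat.lt_floor_add_one _
    have h3 : t - t₀ < ((N t : ℝ) + 1) * ε := by
      rw [← div_lt_iff₀ hε]
      exact h2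
    simp only [ha]
    push_cast
    linarith
  have hN_eq : ∀ (k : ℕ) (s : ℝ), a k ≤ s → s < a (k + 1) → N s = k := by
    intro k s h1 h2
    have hk1 : (k : ℝ) * ε ≤ s - t₀ := by
      simp only [ha] at h1
      linarith
    have hk2 : s - t₀ < ((k : ℝ) + 1) * ε := by
      simp only [ha] at h2
      push_cast at h2
      linarith
    have hnn : (0:ℝ) ≤ (s - t₀) / ε := by
      apply div_nonneg _ hε.le
      have := ha_le k
      linarith
    rw [hN]
    rw [Nat.floor_eq_iff (by positivity)]
    constructor
    · rw [le_div_iff₀ hε]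
      exact hk1
    · push_cast
      rw [div_lt_iff₀ hε]
      exact hk2
  have hN_knot : ∀ k : ℕ, N (a (k + 1)) = k + 1 := by
    intro k
    have : (a (k + 1) - t₀) / ε = ((k : ℝ) + 1) := by
      simp only [ha]
      push_cast
      field_simp
      ring
    rw [hN]
    simp only [this]
    rw [show ((k : ℝ) + 1) = ((k + 1 : ℕ) : ℝ) by push_cast; ring]
    exact Nat.floor_natCast _
  -- x agrees with sol k on each piece
  have hEq : ∀ k : ℕ, Set.EqOn x (sol k) (Set.Icc (a k) (a (k + 1))) := by
    intro k s hs
    rcases hs.2.lt_or_eq with h | h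
    · have : N s = k := hN_eq k s hs.1 h
      simp only [hx, this]
    · subst h
      simp only [hx, hN_knot k]
      exact sol_init k
  have hx0 : x t₀ = x₀ := by
    have hN0 : N t₀ = 0 := by
      rw [hN]
      simp
    simp only [hx, hN0, sol0]
    exact hstep0 t₀ x₀
  refine ⟨x, hx0, ?_⟩
  intro t ht
  replace ht : t₀ ≤ t := ht
  set k := N t with hk
  have h1 : a k ≤ t := hN_left t ht
  have h2 : t < a (k + 1) := hN_right t
  have hxt : x t = sol k t := hEq k ⟨h1, h2.le⟩
  have hDk : HasDerivWithinAt x (f (x t)) (Set.Icc (a k) (a (k + 1))) t := by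
    rw [hxt]
    exact ((sol_deriv k t ⟨h1, h2.le⟩).congr (fun s hs => hEq k hs) hxt)
  rcases h1.lt_or_eq with hlt | heq
  · -- interior of piece: full derivative
    exact (hDk.hasDerivAt (Icc_mem_nhds hlt h2)).hasDerivWithinAt
  · -- t = a k
    rcases ht.lt_or_eq with h0t | h0t
    · -- t₀ < t, so k ≥ 1 : interior knot; combine with previous piece
      have hk1 : k ≠ 0 := by
        intro hzero
        rw [hzero, ha0] at heq
        rw [heq] at h0t
        exact lt_irrefl _ h0t
      obtain ⟨m, hm⟩ : ∃ m, k = m + 1 := ⟨k - 1, by omega⟩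
      rw [hm] at h2 heq hDk
      have htm : t = a (m + 1) := heq.symm
      have hmem_prev : t ∈ Set.Icc (a m) (a (m + 1)) := by
        rw [htm]
        exact ⟨(ha_lt m).le, le_rfl⟩
      have hxt' : x t = sol m t := hEq m hmem_prev
      have hDprev : HasDerivWithinAt x (f (x t)) (Set.Icc (a m) (a (m + 1))) t := by
        rw [hxt']
        exact ((sol_deriv m t hmem_prev).congr (fun s hs => hEq m hs) hxt')
      have hU := hDprev.union hDk
      rw [Set.Icc_union_Icc_eq_Icc (ha_lt m).le (ha_lt (m + 1)).le] at hU
      have hmem2 : Set.Icc (a m) (a (m + 1 + 1)) ∈ nhds t := by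
        apply Icc_mem_nhds
        · rw [htm]; exact ha_lt m
        · exact h2
      exact (hU.hasDerivAt hmem2).hasDerivWithinAt
    · -- t = t₀ : left endpoint of domain, k = 0
      have hk0 : k = 0 := by
        rw [hk, ← h0t]
        rw [hN]
        simp
      rw [hk0] at h2 hDk
      apply hDk.mono_of_mem_nhdsWithin
      have hmem : Set.Ici t₀ ∩ Set.Iio (a 1) ∈ nhdsWithin t (Set.Ici t₀) := by
        apply Filter.inter_mem self_mem_nhdsWithin
        exact mem_nhdsWithin_of_mem_nhds (Iio_mem_nhds h2)
      apply Filter.mem_of_superset hmem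
      rintro s ⟨hs1, hs2⟩
      rw [← ha0] at hs1
      exact ⟨hs1, hs2.le⟩

theorem ode_unique {f : E → E} {K : ℝ≥0} (hf : LipschitzWith K f) {t₀ : ℝ}
    {x y : ℝ → E}
    (hx : ∀ t ∈ Set.Ici t₀, HasDerivWithinAt x (f (x t)) (Set.Ici t₀) t)
    (hy : ∀ t ∈ Set.Ici t₀, HasDerivWithinAt y (f (y t)) (Set.Ici t₀) t)
    (h0 : x t₀ = y t₀) : Set.EqOn x y (Set.Ici t₀) := by
  intro T hT
  replace hT : t₀ ≤ T := hT
  have hxc : ContinuousOn x (Set.Icc t₀ T) := fun s hs =>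
    ((hx s (Set.Icc_subset_Ici_self hs)).continuousWithinAt).mono Set.Icc_subset_Ici_self
  have hyc : ContinuousOn y (Set.Icc t₀ T) := fun s hs =>
    ((hy s (Set.Icc_subset_Ici_self hs)).continuousWithinAt).mono Set.Icc_subset_Ici_self
  exact ODE_solution_unique_of_mem_Icc_right
    (v := fun _ => f) (s := fun _ => Set.univ) (K := K)
    (fun _ _ => hf.lipschitzOnWith) hxc
    (fun s hs => (hx s (Set.Ico_subset_Ici_self hs)).mono (Set.Ici_subset_Ici.mpr hs.1))
    (fun _ _ => trivial) hyc
    (fun s hs => (hy s (Set.Ico_subset_Ici_self hs)).mono (Set.Ici_subset_Ici.mpr hs.1))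
    (fun _ _ => trivial) h0 ⟨hT, le_rfl⟩

/-- For the dynamical system `x' = h(x)` with `h x = γ Aᵀ (b + |x| - Ax)` and any initial
condition `x(t₀) = x₀`, there is a unique solution on `[t₀, ∞)`. -/
theorem soc_ode_exists_unique (n : ℕ) (A : Matrix (Fin (n + 1)) (Fin (n + 1)) ℝ)
    (b : EuclideanSpace ℝ (Fin (n + 1))) (γ : ℝ) (hγ : 0 < γ)
    (t₀ : ℝ) (x₀ : EuclideanSpace ℝ (Fin (n + 1))) :
    ∃ x : ℝ → EuclideanSpace ℝ (Fin (n + 1)),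
      (x t₀ = x₀ ∧
        ∀ t ∈ Set.Ici t₀,
          HasDerivWithinAt x
            (γ • Matrix.toEuclideanLin A.transpose
              (b + socAbs (x t) - Matrix.toEuclideanLin A (x t))) (Set.Ici t₀) t) ∧
      ∀ y : ℝ → EuclideanSpace ℝ (Fin (n + 1)),
        (y t₀ = x₀ ∧
          ∀ t ∈ Set.Ici t₀,
            HasDerivWithinAt y
              (γ • Matrix.toEuclideanLin A.transpose
                (b + socAbs (y t) - Matrix.toEuclideanLin A (y t))) (Set.Ici t₀) t) →
        Set.EqOn x y (Set.Ici t₀) := by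
  classical
  set F : EuclideanSpace ℝ (Fin (n + 1)) → EuclideanSpace ℝ (Fin (n + 1)) :=
    fun z => γ • Matrix.toEuclideanLin A.transpose
      (b + socAbs z - Matrix.toEuclideanLin A z) with hF
  set CA := LinearMap.toContinuousLinearMap (Matrix.toEuclideanLin A) with hCA
  set CAT := LinearMap.toContinuousLinearMap (Matrix.toEuclideanLin A.transpose) with hCAT
  have hA : LipschitzWith ‖CA‖₊
      (fun z : EuclideanSpace ℝ (Fin (n + 1)) => Matrix.toEuclideanLin A z) :=
    CA.lipschitz
  have hAT : LipschitzWith ‖CAT‖₊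
      (fun w : EuclideanSpace ℝ (Fin (n + 1)) => Matrix.toEuclideanLin A.transpose w) :=
    CAT.lipschitz
  have hinner : LipschitzWith (0 + 6 + ‖CA‖₊)
      (fun z : EuclideanSpace ℝ (Fin (n + 1)) =>
        b + socAbs z - Matrix.toEuclideanLin A z) :=
    ((LipschitzWith.const b).add socAbs_lipschitz).sub hA
  have hsmul : LipschitzWith ‖γ‖₊
      (fun w : EuclideanSpace ℝ (Fin (n + 1)) => γ • w) := lipschitzWith_smul γ
  have hFlip : LipschitzWith (‖γ‖₊ * (‖CAT‖₊ * (0 + 6 + ‖CA‖₊))) F :=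
    hsmul.comp (hAT.comp hinner)
  set Ktot : ℝ≥0 := ‖γ‖₊ * (‖CAT‖₊ * (0 + 6 + ‖CA‖₊)) + 1 with hKtot
  have hFlip' : LipschitzWith Ktot F := hFlip.weaken le_self_add
  have hKpos : 0 < (Ktot : ℝ) := by
    have h1 : (0:ℝ≥0) < Ktot := by
      rw [hKtot]
      exact add_pos_of_nonneg_of_pos zero_le one_pos
    exact_mod_cast h1
  obtain ⟨x, hx0, hx'⟩ := ode_exists hKpos hFlip' t₀ x₀
  refine ⟨x, ⟨hx0, fun t ht => hx' t ht⟩, ?_⟩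
  rintro y ⟨hy0, hy'⟩
  exact ode_unique hFlip' hx' (fun t ht => hy' t ht) (by rw [hx0, hy0])
end
end

section
/- Let A be a real n×n matrix, b ∈ ℝ^n, and suppose x* satisfies Ax* − |x*| − b = 0, where |·| is the SOC absolute value. Write r(x) = Ax − |x| − b. Then for every x ∈ ℝ^n, 2·⟨A(x − x*), r(x)⟩ ≥ ‖r(x)‖² + ‖A(x − x*)‖² − ‖x − x*‖². -/
open scoped Classical RealInnerProductSpace

noncomputable section

lemma socAbs_zero {n : ℕ} (x : EuclideanSpace ℝ (Fin (n + 1))) :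
    socAbs x 0 = (|x 0 - ‖socTail x‖| + |x 0 + ‖socTail x‖|) / 2 := by
  unfold socAbs
  split_ifs with h
  · simp [h]
  · simp

lemma socAbs_succ {n : ℕ} (x : EuclideanSpace ℝ (Fin (n + 1))) (i : Fin n) :
    socAbs x i.succ =
      ((|x 0 + ‖socTail x‖| - |x 0 - ‖socTail x‖|) / 2) * (x i.succ / ‖socTail x‖) := by
  unfold socAbs
  split_ifs with h
  · have hx : x i.succ = 0 := by
      have := congrArg (fun v => v i) h
      simpa [socTail] using this
    simp [h, hx, Fin.succ_ne_zero]
  · simp [Fin.succ_ne_zero]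

lemma inner_expand {n : ℕ} (x y : EuclideanSpace ℝ (Fin (n + 1))) :
    ⟪x, y⟫ = x 0 * y 0 + ⟪socTail x, socTail y⟫ := by
  simp [PiLp.inner_apply, RCLike.inner_apply, Fin.sum_univ_succ, socTail, mul_comm]

lemma key_scalar (a t a' t' : ℝ) :
    a * a' + t * t' ≤
      (|a - t| + |a + t|) / 2 * ((|a' - t'| + |a' + t'|) / 2) +
        (|a + t| - |a - t|) / 2 * ((|a' + t'| - |a' - t'|) / 2) := by
  have h1 : (a - t) * (a' - t') ≤ |a - t| * |a' - t'| := by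
    rw [← abs_mul]; exact le_abs_self _
  have h2 : (a + t) * (a' + t') ≤ |a + t| * |a' + t'| := by
    rw [← abs_mul]; exact le_abs_self _
  nlinarith [h1, h2]

lemma inner_tail_socAbs {n : ℕ} (x y : EuclideanSpace ℝ (Fin (n + 1))) :
    ⟪socTail (socAbs x), socTail (socAbs y)⟫ =
      ((|x 0 + ‖socTail x‖| - |x 0 - ‖socTail x‖|) / 2) *
        ((|y 0 + ‖socTail y‖| - |y 0 - ‖socTail y‖|) / 2) /
        (‖socTail x‖ * ‖socTail y‖) * ⟪socTail x, socTail y⟫ := by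
  simp only [PiLp.inner_apply, RCLike.inner_apply, conj_trivial, Finset.mul_sum]
  apply Finset.sum_congr rfl
  intro i _
  show socTail (socAbs y) i * socTail (socAbs x) i = _
  have hx : socTail (socAbs x) i = socAbs x i.succ := rfl
  have hy : socTail (socAbs y) i = socAbs y i.succ := rfl
  rw [hx, hy, socAbs_succ, socAbs_succ]
  show _ = _ * (y i.succ * x i.succ)
  ring

lemma inner_socAbs_ge {n : ℕ} (x y : EuclideanSpace ℝ (Fin (n + 1))) :
    ⟪x, y⟫ ≤ ⟪socAbs x, socAbs y⟫ := by
  have hx0 : socAbs x 0 = (|x 0 - ‖socTail x‖| + |x 0 + ‖socTail x‖|) / 2 := socAbs_zero x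
  have hy0 : socAbs y 0 = (|y 0 - ‖socTail y‖| + |y 0 + ‖socTail y‖|) / 2 := socAbs_zero y
  rw [inner_expand x y, inner_expand (socAbs x) (socAbs y), hx0, hy0, inner_tail_socAbs]
  set a := x 0
  set a' := y 0
  set t := ‖socTail x‖ with ht
  set t' := ‖socTail y‖ with ht'
  set c := ⟪socTail x, socTail y⟫ with hc
  set f := (|a - t| + |a + t|) / 2 with hf
  set f' := (|a' - t'| + |a' + t'|) / 2 with hf'
  set s := (|a + t| - |a - t|) / 2 with hs
  set s' := (|a' + t'| - |a' - t'|) / 2 with hs'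
  have htn : 0 ≤ t := norm_nonneg _
  have htn' : 0 ≤ t' := norm_nonneg _
  have hcle : |c| ≤ t * t' := abs_real_inner_le_norm _ _
  have habs : ∀ u v : ℝ, 0 ≤ v → |(|u + v| - |u - v|) / 2| ≤ v := by
    intro u v hv
    have h1 : |(|u + v| - |u - v|)| ≤ |u + v - (u - v)| := abs_abs_sub_abs_le_abs_sub _ _
    have h2 : |u + v - (u - v)| = 2 * v := by
      rw [show u + v - (u - v) = 2 * v by ring, abs_of_nonneg (by linarith)]
    rw [abs_div, abs_two]
    linarith [h2 ▸ h1]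
  have hsle : |s| ≤ t := habs a t htn
  have hsle' : |s'| ≤ t' := habs a' t' htn'
  have hfge : |a| ≤ f := by
    have : |a - t + (a + t)| ≤ |a - t| + |a + t| := abs_add_le _ _
    rw [show a - t + (a + t) = 2 * a by ring, abs_mul] at this
    rw [hf]
    cases' abs_cases (2:ℝ) with h h <;> [skip; linarith] <;> rw [h.1] at this <;> linarith
  have hfge' : |a'| ≤ f' := by
    have : |a' - t' + (a' + t')| ≤ |a' - t'| + |a' + t'| := abs_add_le _ _
    rw [show a' - t' + (a' + t') = 2 * a' by ring, abs_mul] at this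
    rw [hf']
    cases' abs_cases (2:ℝ) with h h <;> [skip; linarith] <;> rw [h.1] at this <;> linarith
  have hkey : a * a' + t * t' ≤ f * f' + s * s' := key_scalar a t a' t'
  rcases eq_or_lt_of_le (mul_nonneg htn htn') with hT | hT
  · -- t * t' = 0, so c = 0
    have hc0 : c = 0 := by
      have := abs_nonneg c
      have : |c| = 0 := le_antisymm (hcle.trans_eq hT.symm) (abs_nonneg c)
      exact abs_eq_zero.mp this
    rw [hc0]
    have h1 : a * a' ≤ |a| * |a'| := by rw [← abs_mul]; exact le_abs_self _
    have h2 : |a| * |a'| ≤ f * f' :=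
      mul_le_mul hfge hfge' (abs_nonneg _) ((abs_nonneg a).trans hfge)
    simp only [mul_zero, add_zero]
    linarith
  · -- t * t' > 0
    have hTne : t * t' ≠ 0 := ne_of_gt hT
    have hPle : s * s' ≤ t * t' := by
      calc s * s' ≤ |s * s'| := le_abs_self _
      _ = |s| * |s'| := abs_mul _ _
      _ ≤ t * t' := mul_le_mul hsle hsle' (abs_nonneg _) htn
    have hq : s * s' / (t * t') - 1 ≤ 0 := by
      rw [sub_nonpos, div_le_one hT]; exact hPle
    have hcT : c ≤ t * t' := (le_abs_self c).trans hcle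
    have hstep : (s * s' / (t * t') - 1) * (t * t') ≤ (s * s' / (t * t') - 1) * c :=
      mul_le_mul_of_nonpos_left hcT hq
    rw [sub_mul, div_mul_cancel₀ _ hTne, one_mul] at hstep
    nlinarith [hstep, hkey]

lemma norm_socAbs_sq {n : ℕ} (x : EuclideanSpace ℝ (Fin (n + 1))) :
    ‖socAbs x‖ ^ 2 = ‖x‖ ^ 2 := by
  rw [← real_inner_self_eq_norm_sq, ← real_inner_self_eq_norm_sq,
      inner_expand, inner_expand, socAbs_zero, inner_tail_socAbs,
      real_inner_self_eq_norm_sq]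
  set a := x 0
  set t := ‖socTail x‖ with htdef
  rcases eq_or_ne t 0 with h0 | h0
  · rw [h0]
    simp
  · have h1 : (|a + t| - |a - t|) / 2 * ((|a + t| - |a - t|) / 2) / (t * t) * t ^ 2
        = ((|a + t| - |a - t|) / 2) ^ 2 := by
      field_simp
    rw [h1]
    nlinarith [sq_abs (a - t), sq_abs (a + t), abs_nonneg (a - t), abs_nonneg (a + t)]

lemma socAbs_lipschitz_s13 {n : ℕ} (x y : EuclideanSpace ℝ (Fin (n + 1))) :
    ‖socAbs x - socAbs y‖ ^ 2 ≤ ‖x - y‖ ^ 2 := by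
  rw [norm_sub_sq_real, norm_sub_sq_real, norm_socAbs_sq, norm_socAbs_sq]
  linarith [inner_socAbs_ge x y]

/-- If `x*` solves the SOCAVE `Ax - |x| - b = 0` and `r x = Ax - |x| - b`, then
`2 ⟪A(x - x*), r x⟫ ≥ ‖r x‖² + ‖A(x - x*)‖² - ‖x - x*‖²` for every `x`. -/
theorem soc_residual_inequality (n : ℕ) (A : Matrix (Fin (n + 1)) (Fin (n + 1)) ℝ)
    (b xs : EuclideanSpace ℝ (Fin (n + 1)))
    (hxs : Matrix.toEuclideanLin A xs - socAbs xs - b = 0) :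
    ∀ x : EuclideanSpace ℝ (Fin (n + 1)),
      ‖Matrix.toEuclideanLin A x - socAbs x - b‖ ^ 2 +
          ‖Matrix.toEuclideanLin A (x - xs)‖ ^ 2 - ‖x - xs‖ ^ 2 ≤
        2 * ⟪Matrix.toEuclideanLin A (x - xs),
              Matrix.toEuclideanLin A x - socAbs x - b⟫ := by
  intro x
  set L := Matrix.toEuclideanLin A with hL
  set r := L x - socAbs x - b with hrdef
  set u := L (x - xs) with hudef
  have hAxs : L xs = socAbs xs + b := by
    have h := sub_eq_zero.mp hxs
    exact (eq_add_of_sub_eq h).trans (add_comm _ _)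
  have hur : u - r = socAbs x - socAbs xs := by
    rw [hudef, hrdef, map_sub, hAxs]
    abel
  have h1 : ‖u - r‖ ^ 2 ≤ ‖x - xs‖ ^ 2 := by
    rw [hur]; exact socAbs_lipschitz_s13 x xs
  have h2 : ‖u - r‖ ^ 2 = ‖u‖ ^ 2 - 2 * ⟪u, r⟫ + ‖r‖ ^ 2 := norm_sub_sq_real u r
  linarith
end
end

section
/- Let A = diag(1, −1) as a 2×2 real matrix, and identify ℝ² with ℝ × ℝ. The solution set of the second-order-cone absolute value equation Ax − |x| = 0, where |·| is the SOC absolute value on ℝ², is exactly {(a, 0) : a ≥ 0}. -/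
open scoped Classical RealInnerProductSpace

noncomputable section

lemma norm_socTail (x : EuclideanSpace ℝ (Fin (1 + 1))) : ‖socTail x‖ = |x 1| := by
  rw [EuclideanSpace.norm_eq]
  have : socTail x 0 = x 1 := rfl
  simp [Finset.sum_fin_eq_sum_range, this, Real.sqrt_sq_eq_abs]

lemma socTail_eq_zero_iff (x : EuclideanSpace ℝ (Fin (1 + 1))) :
    socTail x = 0 ↔ x 1 = 0 := by
  constructor
  · intro h
    have := congrArg (fun v => v 0) h
    simpa [socTail] using this
  · intro h
    ext i
    fin_cases i
    simpa [socTail] using h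

/-- For `A = diag(1, -1)` and `b = 0`, the solution set of the SOCAVE `Ax - |x| = 0`
in `ℝ²` is exactly `{(a, 0) : a ≥ 0}`. -/
theorem socave_toy_solution_set :
    {x : EuclideanSpace ℝ (Fin (1 + 1)) |
        Matrix.toEuclideanLin !![(1 : ℝ), 0; 0, -1] x - socAbs x = 0} =
      {x : EuclideanSpace ℝ (Fin (1 + 1)) |
        ∃ a : ℝ, 0 ≤ a ∧ x = (WithLp.equiv 2 (Fin (1 + 1) → ℝ)).symm ![a, 0]} := by
  ext x
  simp only [Set.mem_setOf_eq]
  have hA0 : Matrix.toEuclideanLin !![(1 : ℝ), 0; 0, -1] x 0 = x 0 := by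
    simp [Matrix.toEuclideanLin, Matrix.toLin'_apply, Matrix.mulVec, dotProduct, Matrix.vecHead, Matrix.vecTail,
      Fin.sum_univ_two]
  have hA1 : Matrix.toEuclideanLin !![(1 : ℝ), 0; 0, -1] x 1 = -x 1 := by
    simp [Matrix.toEuclideanLin, Matrix.toLin'_apply, Matrix.mulVec, dotProduct, Matrix.vecHead, Matrix.vecTail,
      Fin.sum_univ_two]
  constructor
  · intro h
    have h0 : Matrix.toEuclideanLin !![(1 : ℝ), 0; 0, -1] x 0 - socAbs x 0 = 0 :=
      congrArg (fun v => v 0) h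
    have h1 : Matrix.toEuclideanLin !![(1 : ℝ), 0; 0, -1] x 1 - socAbs x 1 = 0 :=
      congrArg (fun v => v 1) h
    rw [hA0] at h0
    rw [hA1] at h1
    by_cases hz : socTail x = 0
    · have hx1 : x 1 = 0 := (socTail_eq_zero_iff x).1 hz
      have e0 : socAbs x 0 = |x 0| := by simp [socAbs, hz]
      rw [e0, sub_eq_zero] at h0
      refine ⟨x 0, by rw [h0]; positivity, ?_⟩
      ext i
      fin_cases i
      · rfl
      · exact hx1
    · exfalso
      have hx1 : x 1 ≠ 0 := fun h' => hz ((socTail_eq_zero_iff x).2 h')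
      have hnt : ‖socTail x‖ = |x 1| := norm_socTail x
      have e0 : socAbs x 0 = (abs (x 0 - abs (x 1)) + abs (x 0 + abs (x 1))) / 2 := by
        simp [socAbs, hz, hnt]
      have e1 : socAbs x 1 = ((abs (x 0 + abs (x 1)) - abs (x 0 - abs (x 1))) / 2)
          * (x 1 / abs (x 1)) := by
        simp [socAbs, hz, hnt]
      rw [e0, sub_eq_zero] at h0
      rw [e1] at h1
      have ht : (0 : ℝ) < |x 1| := abs_pos.2 hx1
      have h1' : abs (x 0 + abs (x 1)) - abs (x 0 - abs (x 1)) = -2 * |x 1| := by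
        have h2 := h1
        field_simp at h2
        have h3 : ((abs (x 0 + abs (x 1)) - abs (x 0 - abs (x 1))) + 2 * abs (x 1)) * x 1 = 0 := by
          linear_combination -h2
        rcases mul_eq_zero.1 h3 with h4 | h4
        · linarith
        · exact absurd h4 hx1
      have hx0 : 0 ≤ x 0 := by
        have := abs_nonneg (x 0 - abs (x 1))
        have := abs_nonneg (x 0 + abs (x 1))
        linarith
      have hq : abs (x 0 - abs (x 1)) ≤ x 0 + abs (x 1) := by
        rw [abs_le]; constructor <;> linarith
      have hp : abs (x 0 + abs (x 1)) = x 0 + abs (x 1) := abs_of_nonneg (by linarith)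
      linarith
  · rintro ⟨a, ha, rfl⟩
    set y : EuclideanSpace ℝ (Fin (1 + 1)) := (WithLp.equiv 2 (Fin (1 + 1) → ℝ)).symm ![a, 0]
      with hy
    have hy0 : y 0 = a := rfl
    have hy1 : y 1 = 0 := rfl
    have hz : socTail y = 0 := (socTail_eq_zero_iff y).2 hy1
    have hB0 : Matrix.toEuclideanLin !![(1 : ℝ), 0; 0, -1] y 0 = y 0 := by
      simp [Matrix.toEuclideanLin, Matrix.toLin'_apply, Matrix.mulVec, dotProduct, Matrix.vecHead, Matrix.vecTail,
        Fin.sum_univ_two]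
    have hB1 : Matrix.toEuclideanLin !![(1 : ℝ), 0; 0, -1] y 1 = -y 1 := by
      simp [Matrix.toEuclideanLin, Matrix.toLin'_apply, Matrix.mulVec, dotProduct, Matrix.vecHead, Matrix.vecTail,
        Fin.sum_univ_two]
    ext i
    have e0 : socAbs y 0 = |y 0| := by simp [socAbs, hz]
    have e1 : socAbs y 1 = 0 := by simp [socAbs, hz]
    fin_cases i
    · show Matrix.toEuclideanLin !![(1 : ℝ), 0; 0, -1] y 0 - socAbs y 0 = 0
      rw [hB0, e0, hy0, abs_of_nonneg ha, sub_self]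
    · show Matrix.toEuclideanLin !![(1 : ℝ), 0; 0, -1] y 1 - socAbs y 1 = 0
      rw [hB1, e1, hy1]; ring
end
end

section
/- Let A = diag(1, −1) as a 2×2 real matrix, b = (1, 1), and identify ℝ² with ℝ × ℝ. Then the second-order-cone absolute value equation Ax − |x| − b = 0, where |·| is the SOC absolute value on ℝ², has no solution. -/
open scoped Classical RealInnerProductSpace

noncomputable section

/-- For `A = diag(1, -1)` and `b = (1, 1)`, the SOCAVE `Ax - |x| - b = 0` in `ℝ²`
has no solution. -/
theorem socave_toy_no_solution :
    ¬ ∃ x : EuclideanSpace ℝ (Fin (1 + 1)),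
      Matrix.toEuclideanLin !![(1 : ℝ), 0; 0, -1] x - socAbs x -
        (WithLp.equiv 2 (Fin (1 + 1) → ℝ)).symm ![1, 1] = 0 := by
  rintro ⟨x, hx⟩
  have h0 := congrArg (fun v => v 0) hx
  have habs : x 0 ≤ socAbs x 0 := by
    unfold socAbs
    split
    · simpa [PiLp.toLp_apply] using le_abs_self (x 0)
    · simp only [PiLp.toLp_apply, if_pos rfl, if_true]
      have h1 := le_abs_self (x 0 - ‖socTail x‖)
      have h2 := le_abs_self (x 0 + ‖socTail x‖)
      linarith
  simp only [PiLp.sub_apply, Matrix.toEuclideanLin_apply, WithLp.equiv_symm_apply, PiLp.toLp_apply,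
    Matrix.mulVec, dotProduct, Fin.sum_univ_two, Matrix.cons_val', Matrix.cons_val_zero,
    Matrix.empty_val', Matrix.cons_val_fin_one, Matrix.head_cons, PiLp.zero_apply] at h0
  norm_num at h0
  linarith
end
end
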